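/- Let (Ω, F, (F_t)_{t≥0}, ℙ) be a filtered probability space and define F_∞ = σ(∪_{t≥0} F_t). Suppose (U_t)_{t≥0} is an F-measurable non-negative process such that sup_{t≥0} U_t has finite expectation and the process (𝔼(U_t | F_t))_{t≥0} is càdlàg. If lim_{t→∞} 𝔼(U_t | F_∞) = Y almost surely, then lim_{t→∞} 𝔼(U_t | F_t) = Y almost surely. -/

import Mathlib

/-!
STATEMENT 12 (Proposition from the paper, essentially from Harris–Roberts):
Let `(Ω, F, (F_t)_{t≥0}, ℙ)` be a filtered probability space and `F_∞ = σ(∪_t F_t)`.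
Suppose `(U_t)_{t≥0}` is an `F`-measurable non-negative process such that `sup_{t≥0} U_t`
has finite expectation and `(𝔼(U_t | F_t))_{t≥0}` is càdlàg.  If
`lim_{t→∞} 𝔼(U_t | F_∞) = Y` almost surely, then `lim_{t→∞} 𝔼(U_t | F_t) = Y`
almost surely.
-/

noncomputable section

open MeasureTheory Filter Topology
open scoped ENNReal

set_option linter.unusedVariables false
set_option linter.unusedSectionVars false
set_option maxHeartbeats 1000000

namespace CondexpLimitAux

variable {Ω : Type*} {mΩ : MeasurableSpace Ω} {μ : Measure Ω} [IsProbabilityMeasure μ]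
  (ℱ : MeasureTheory.Filtration ℝ mΩ)

/-- finite Doob maximal inequality for conditional expectations -/
lemma maximal_fin (W : Ω → ℝ) (hW : Integrable W μ) {ε : ℝ} (hε : 0 < ε) (s : Finset ℝ) :
    ε * (μ {ω | ∃ t ∈ s, ε < (μ[W|ℱ t]) ω}).toReal
      ≤ ∫ ω in {ω | ∃ t ∈ s, ε < (μ[W|ℱ t]) ω}, W ω ∂μ := by
  classical
  induction s using Finset.induction_on_max with
  | empty =>
      simp
  | insert a s ha ih =>
      have hNmeas : ∀ t : ℝ, MeasurableSet[ℱ t] {ω | ε < (μ[W|ℱ t]) ω} := fun t =>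
        stronglyMeasurable_condExp.measurable measurableSet_Ioi
      set A : Set Ω := {ω | ∃ t ∈ s, ε < (μ[W|ℱ t]) ω} with hA
      have hAmeasF : MeasurableSet[ℱ a] A := by
        have : A = ⋃ t ∈ (s : Set ℝ), {ω | ε < (μ[W|ℱ t]) ω} := by
          ext ω; simp [hA]
        rw [this]
        exact MeasurableSet.biUnion s.countable_toSet
          (fun t ht => ℱ.mono (le_of_lt (ha t ht)) _ (hNmeas t))
      have hAmeas : MeasurableSet A := ℱ.le a _ hAmeasF
      set C : Set Ω := {ω | ε < (μ[W|ℱ a]) ω} \ A with hC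
      have hCmeasF : MeasurableSet[ℱ a] C := (hNmeas a).diff hAmeasF
      have hCmeas : MeasurableSet C := ℱ.le a _ hCmeasF
      have hdisj : Disjoint A C := disjoint_sdiff_self_right
      have hset : {ω | ∃ t ∈ insert a s, ε < (μ[W|ℱ t]) ω} = A ∪ C := by
        ext ω
        simp only [Finset.mem_insert, Set.mem_union, hC, Set.mem_diff, hA, Set.mem_setOf_eq]
        constructor
        · rintro ⟨t, ht | ht, hlt⟩
          · subst ht
            by_cases h : ∃ t ∈ s, ε < (μ[W|ℱ t]) ω
            · exact Or.inl h
            · exact Or.inr ⟨hlt, h⟩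
          · exact Or.inl ⟨t, ht, hlt⟩
        · rintro (⟨t, ht, hlt⟩ | ⟨hlt, _⟩)
          · exact ⟨t, Or.inr ht, hlt⟩
          · exact ⟨a, Or.inl rfl, hlt⟩
      rw [hset]
      have hμ : (μ (A ∪ C)).toReal = (μ A).toReal + (μ C).toReal := by
        rw [measure_union hdisj hCmeas, ENNReal.toReal_add (measure_ne_top _ _) (measure_ne_top _ _)]
      have hCbound : ε * (μ C).toReal ≤ ∫ ω in C, W ω ∂μ := by
        have h1 : ∫ ω in C, W ω ∂μ = ∫ ω in C, (μ[W|ℱ a]) ω ∂μ :=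
          (setIntegral_condExp (ℱ.le a) hW hCmeasF).symm
        have h2 : ∫ ω in C, ε ∂μ ≤ ∫ ω in C, (μ[W|ℱ a]) ω ∂μ := by
          refine setIntegral_mono_on integrableOn_const
            integrable_condExp.integrableOn hCmeas ?_
          intro ω hω
          exact le_of_lt hω.1
        have h3 : ∫ ω in C, ε ∂μ = (μ C).toReal * ε := by
          simp [setIntegral_const, smul_eq_mul, Measure.real]
        rw [h1]
        linarith [h2, h3]
      have hsum : ∫ ω in A ∪ C, W ω ∂μ = (∫ ω in A, W ω ∂μ) + ∫ ω in C, W ω ∂μ :=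
        setIntegral_union hdisj hCmeas hW.integrableOn hW.integrableOn
      rw [hμ, hsum, mul_add]
      exact add_le_add ih hCbound

/-- countable Doob maximal inequality over the rationals -/
lemma maximal_rat (W : Ω → ℝ) (hW : Integrable W μ) (hW0 : 0 ≤ᵐ[μ] W)
    {ε : ℝ} (hε : 0 < ε) :
    μ {ω | ∃ q : ℚ, ε < (μ[W|ℱ (q : ℝ)]) ω} ≤ ENNReal.ofReal ((∫ ω, W ω ∂μ) / ε) := by
  classical
  set e : ℕ ≃ ℚ := (Denumerable.eqv ℚ).symm
  set S : ℕ → Finset ℝ := fun m => (Finset.range m).image (fun i => ((e i : ℚ) : ℝ)) with hS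
  set A : ℕ → Set Ω := fun m => {ω | ∃ t ∈ S m, ε < (μ[W|ℱ t]) ω} with hAdef
  have hmono : Monotone A := by
    intro i j hij ω hω
    obtain ⟨t, ht, hlt⟩ := hω
    exact ⟨t, Finset.image_subset_image (Finset.range_subset_range.2 hij) ht, hlt⟩
  have hunion : {ω | ∃ q : ℚ, ε < (μ[W|ℱ (q : ℝ)]) ω} = ⋃ m, A m := by
    ext ω
    simp only [Set.mem_setOf_eq, Set.mem_iUnion, hAdef]
    constructor
    · rintro ⟨q, hq⟩
      refine ⟨e.symm q + 1, (q : ℝ), ?_, ?_⟩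
      · refine Finset.mem_image.2 ⟨e.symm q, ?_, by simp⟩
        exact Finset.mem_range.2 (Nat.lt_succ_self _)
      · exact hq
    · rintro ⟨m, t, ht, hlt⟩
      obtain ⟨i, _, rfl⟩ := Finset.mem_image.1 ht
      exact ⟨e i, hlt⟩
  have hbound : ∀ m, μ (A m) ≤ ENNReal.ofReal ((∫ ω, W ω ∂μ) / ε) := by
    intro m
    have h1 := maximal_fin ℱ W hW hε (S m)
    have h2 : ∫ ω in A m, W ω ∂μ ≤ ∫ ω, W ω ∂μ := setIntegral_le_integral hW hW0
    have h3 : (μ (A m)).toReal ≤ (∫ ω, W ω ∂μ) / ε := by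
      rw [le_div_iff₀ hε]
      calc (μ (A m)).toReal * ε = ε * (μ (A m)).toReal := mul_comm _ _
        _ ≤ ∫ ω in A m, W ω ∂μ := h1
        _ ≤ _ := h2
    calc μ (A m) = ENNReal.ofReal ((μ (A m)).toReal) := (ENNReal.ofReal_toReal (measure_ne_top _ _)).symm
      _ ≤ _ := ENNReal.ofReal_le_ofReal h3
  rw [hunion, hmono.measure_iUnion]
  exact iSup_le hbound

/-- Markov inequality in the form we need -/
lemma markov_abs (g : Ω → ℝ) (hg : Integrable g μ) {ε : ℝ} (hε : 0 < ε) :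
    μ {ω | ε < |g ω|} ≤ ENNReal.ofReal ((∫ ω, |g ω| ∂μ) / ε) := by
  have habs : Integrable (fun ω => |g ω|) μ := hg.abs
  have h0 : 0 ≤ᵐ[μ] fun ω => |g ω| := Eventually.of_forall fun ω => abs_nonneg _
  have hlin : ∫⁻ ω, ENNReal.ofReal (|g ω|) ∂μ = ENNReal.ofReal (∫ ω, |g ω| ∂μ) :=
    (ofReal_integral_eq_lintegral_ofReal habs h0).symm
  have hmk := mul_meas_ge_le_lintegral₀
    (f := fun ω => ENNReal.ofReal (|g ω|))
    (hg.abs.aestronglyMeasurable.aemeasurable.ennreal_ofReal) (ENNReal.ofReal ε)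
  have hsub : {ω | ε < |g ω|} ⊆ {ω | ENNReal.ofReal ε ≤ ENNReal.ofReal (|g ω|)} :=
    fun ω hω => ENNReal.ofReal_le_ofReal (le_of_lt hω)
  calc μ {ω | ε < |g ω|} ≤ μ {ω | ENNReal.ofReal ε ≤ ENNReal.ofReal (|g ω|)} := measure_mono hsub
    _ ≤ (∫⁻ ω, ENNReal.ofReal (|g ω|) ∂μ) / ENNReal.ofReal ε := by
        rw [ENNReal.le_div_iff_mul_le (Or.inl (by simp [hε])) (Or.inl ENNReal.ofReal_ne_top),
          mul_comm]
        exact hmk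
    _ = ENNReal.ofReal ((∫ ω, |g ω| ∂μ) / ε) := by
        rw [hlin, ENNReal.ofReal_div_of_pos hε]

/-- extension of a limit along rationals to a limit along the reals,
using right continuity -/
lemma extend_rat_tendsto (f : ℝ → ℝ) (y : ℝ)
    (hrc : ∀ t : ℝ, Tendsto f (𝓝[≥] t) (𝓝 (f t)))
    (h : Tendsto (fun q : ℚ => f q) atTop (𝓝 y)) :
    Tendsto f atTop (𝓝 y) := by
  rw [Metric.tendsto_atTop] at h ⊢
  intro ε hε
  obtain ⟨N, hN⟩ := h (ε / 2) (half_pos hε)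
  refine ⟨(N : ℝ), fun t ht => ?_⟩
  have hrc' := Metric.tendsto_nhdsWithin_nhds.mp (hrc t) (ε / 2) (half_pos hε)
  obtain ⟨δ, hδpos, hδ⟩ := hrc'
  obtain ⟨q, hq1, hq2⟩ := exists_rat_btwn (show t < t + δ by linarith)
  have hqN : N ≤ q := by
    have : (N : ℝ) ≤ (q : ℝ) := le_trans ht (le_of_lt hq1)
    exact_mod_cast this
  have h1 : dist (f (q : ℝ)) (f t) < ε / 2 := by
    refine hδ (Set.mem_Ici.2 (le_of_lt hq1)) ?_
    rw [Real.dist_eq, abs_of_nonneg (by linarith)]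
    linarith
  have h2 : dist (f (q : ℝ)) y < ε / 2 := hN q hqN
  calc dist (f t) y ≤ dist (f t) (f (q : ℝ)) + dist (f (q : ℝ)) y := dist_triangle _ _ _
    _ < ε / 2 + ε / 2 := add_lt_add (by rw [dist_comm]; exact h1) h2
    _ = ε := add_halves ε

/-- |E[f|m]| ≤ E[|f| | m] a.e. -/
lemma abs_condexp_le_abs {m : MeasurableSpace Ω} (f : Ω → ℝ) (hf : Integrable f μ) :
    ∀ᵐ ω ∂μ, |(μ[f|m]) ω| ≤ (μ[(fun ω => |f ω|)|m]) ω := by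
  filter_upwards [condExp_mono hf hf.abs
      (ae_of_all μ (fun x => le_abs_self (f x))),
    EventuallyLE.trans (condExp_neg f m).symm.le
      (condExp_mono hf.neg hf.abs
        (ae_of_all μ (fun x => neg_le_abs (f x))))] with x hx₁ hx₂
  rw [abs_le]
  refine ⟨?_, hx₁⟩
  rw [neg_le]
  simpa using hx₂

end CondexpLimitAux

open CondexpLimitAux

theorem condexp_limit_along_filtration
    {Ω : Type*} {mΩ : MeasurableSpace Ω} (μ : Measure Ω) [IsProbabilityMeasure μ]
    (ℱ : MeasureTheory.Filtration ℝ mΩ)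
    (U : ℝ → Ω → ℝ)
    (hUmeas : ∀ t : ℝ, Measurable (U t))
    (hUnonneg : ∀ t : ℝ, ∀ ω : Ω, 0 ≤ U t ω)
    (hUsup : (∫⁻ ω, ⨆ t ∈ Set.Ici (0:ℝ), ENNReal.ofReal (U t ω) ∂μ) ≠ ∞)
    (hcadlag : ∀ ω : Ω, ∀ t : ℝ,
      Tendsto (fun s => (μ[U s|ℱ s]) ω) (𝓝[≥] t) (𝓝 ((μ[U t|ℱ t]) ω)) ∧
        ∃ l : ℝ, Tendsto (fun s => (μ[U s|ℱ s]) ω) (𝓝[<] t) (𝓝 l))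
    (Y : Ω → ℝ)
    (hY : ∀ᵐ ω ∂μ,
      Tendsto (fun t => (μ[U t|(⨆ s : ℝ, (ℱ s : MeasurableSpace Ω))]) ω) atTop (𝓝 (Y ω))) :
    ∀ᵐ ω ∂μ, Tendsto (fun t => (μ[U t|ℱ t]) ω) atTop (𝓝 (Y ω)) := by
  classical
  -- notation
  have hmI : (⨆ s : ℝ, (ℱ s : MeasurableSpace Ω)) ≤ mΩ := iSup_le fun s => ℱ.le s
  have hle : ∀ t : ℝ, (ℱ t : MeasurableSpace Ω) ≤ (⨆ s : ℝ, (ℱ s : MeasurableSpace Ω)) := fun t => le_iSup (fun s : ℝ => (ℱ s : MeasurableSpace Ω)) t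
  haveI : SigmaFinite (μ.trim hmI) := by infer_instance
  -- rationals → reals tendsto
  have hQR : Tendsto (fun q : ℚ => (q : ℝ)) atTop atTop := by
    apply tendsto_atTop_atTop.2
    intro b
    obtain ⟨q, hq⟩ := exists_rat_gt b
    exact ⟨q, fun a ha => le_trans (le_of_lt hq) (by exact_mod_cast ha)⟩
  -- the dominating function S
  set V : Ω → ℝ≥0∞ := fun ω => ⨆ q : ℚ, ⨆ _ : (0:ℚ) ≤ q, ENNReal.ofReal (U q ω) with hVdef
  have hVmeas : Measurable[mΩ] V := by
    refine Measurable.iSup fun q => Measurable.iSup fun _ => ?_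
    exact ENNReal.measurable_ofReal.comp (hUmeas q)
  have hVle : ∀ ω, V ω ≤ ⨆ t ∈ Set.Ici (0:ℝ), ENNReal.ofReal (U t ω) := by
    intro ω
    refine iSup_le fun q => iSup_le fun hq => ?_
    have hq' : (q : ℝ) ∈ Set.Ici (0:ℝ) := by
      simp only [Set.mem_Ici]
      exact_mod_cast hq
    exact le_iSup₂ (f := fun (t : ℝ) (_ : t ∈ Set.Ici (0:ℝ)) => ENNReal.ofReal (U t ω)) (q:ℝ) hq'
  have hVint : ∫⁻ ω, V ω ∂μ ≠ ∞ :=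
    ne_top_of_le_ne_top hUsup (lintegral_mono fun ω => hVle ω)
  have hVfin : ∀ᵐ ω ∂μ, V ω < ∞ := ae_lt_top hVmeas hVint
  set S : Ω → ℝ := fun ω => (V ω).toReal with hSdef
  have hSmeas : Measurable[mΩ] S := hVmeas.ennreal_toReal
  have hSint : Integrable S μ := integrable_toReal_of_lintegral_ne_top hVmeas.aemeasurable hVint
  have hUleS : ∀ᵐ ω ∂μ, ∀ q : ℚ, 0 ≤ q → U q ω ≤ S ω := by
    filter_upwards [hVfin] with ω hω q hq
    have h1 : ENNReal.ofReal (U q ω) ≤ V ω :=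
      le_iSup₂ (f := fun (q : ℚ) (_ : (0:ℚ) ≤ q) => ENNReal.ofReal (U q ω)) q hq
    calc U q ω = (ENNReal.ofReal (U q ω)).toReal := (ENNReal.toReal_ofReal (hUnonneg _ ω)).symm
      _ ≤ (V ω).toReal := ENNReal.toReal_mono hω.ne h1
  have hUint : ∀ q : ℚ, 0 ≤ q → Integrable (U q) μ := by
    intro q hq
    refine hSint.mono' (hUmeas q).aestronglyMeasurable ?_
    filter_upwards [hUleS] with ω h
    rw [Real.norm_eq_abs, abs_of_nonneg (hUnonneg _ ω)]
    exact h q hq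
  -- the F_infty projections
  set Z : ℚ → Ω → ℝ := fun q => μ[U q | (⨆ s : ℝ, (ℱ s : MeasurableSpace Ω))] with hZdef
  set G : Ω → ℝ := μ[S | (⨆ s : ℝ, (ℱ s : MeasurableSpace Ω))] with hGdef
  have hGint : Integrable G μ := integrable_condExp
  have hGnn : 0 ≤ᵐ[μ] G := condExp_nonneg (Eventually.of_forall fun ω => ENNReal.toReal_nonneg)
  have hZint : ∀ q, Integrable (Z q) μ := fun q => integrable_condExp
  have hZnn : ∀ q : ℚ, 0 ≤ᵐ[μ] Z q := fun q =>
    condExp_nonneg (Eventually.of_forall (fun ω => hUnonneg q ω))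
  have hZleG : ∀ q : ℚ, ∀ᵐ ω ∂μ, 0 ≤ q → Z q ω ≤ G ω := by
    intro q
    by_cases hq : 0 ≤ q
    · have := condExp_mono (m := (⨆ s : ℝ, (ℱ s : MeasurableSpace Ω))) (hUint q hq) hSint
        (by filter_upwards [hUleS] with ω h; exact h q hq)
      filter_upwards [this] with ω h _
      exact h
    · exact Eventually.of_forall fun ω h => absurd h hq
  -- limits along rationals and naturals
  have hYQ : ∀ᵐ ω ∂μ, Tendsto (fun q : ℚ => Z q ω) atTop (𝓝 (Y ω)) := by
    filter_upwards [hY] with ω h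
    exact h.comp hQR
  have hYN : ∀ᵐ ω ∂μ, Tendsto (fun n : ℕ => Z n ω) atTop (𝓝 (Y ω)) := by
    filter_upwards [hYQ] with ω h
    exact h.comp (tendsto_natCast_atTop_atTop)
  -- integrability of Y
  have hYmeas : AEStronglyMeasurable Y μ := by
    refine aestronglyMeasurable_of_tendsto_ae (f := fun (n : ℕ) (ω : Ω) => Z (n : ℚ) ω) atTop
      (fun n : ℕ => (stronglyMeasurable_condExp.mono hmI).aestronglyMeasurable) ?_
    filter_upwards [hYN] with ω h
    exact h
  have hYbd : ∀ᵐ ω ∂μ, 0 ≤ Y ω ∧ Y ω ≤ G ω := by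
    have h1 : ∀ᵐ ω ∂μ, ∀ q : ℚ, 0 ≤ Z q ω := ae_all_iff.2 hZnn
    have h2 : ∀ᵐ ω ∂μ, ∀ q : ℚ, 0 ≤ q → Z q ω ≤ G ω := ae_all_iff.2 hZleG
    filter_upwards [hYQ, h1, h2] with ω ht h1 h2
    constructor
    · exact ge_of_tendsto ht (Eventually.of_forall fun q => h1 q)
    · exact le_of_tendsto ht ((eventually_ge_atTop (0:ℚ)).mono fun q hq => h2 q hq)
  have hYint : Integrable Y μ := by
    refine hGint.mono' hYmeas ?_
    filter_upwards [hYbd] with ω ⟨h0, h1⟩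
    rw [Real.norm_eq_abs, abs_of_nonneg h0]
    exact h1
  -- Y is a.e. equal to its F_infty conditional expectation
  set Y' : Ω → ℝ := μ[Y | (⨆ s : ℝ, (ℱ s : MeasurableSpace Ω))] with hY'def
  have hY'int : Integrable Y' μ := integrable_condExp
  have hY'meas : StronglyMeasurable[(⨆ s : ℝ, (ℱ s : MeasurableSpace Ω))] Y' := stronglyMeasurable_condExp
  have hYY' : Y' =ᵐ[μ] Y := by
    -- L¹ convergence of Z n to Y
    have hZsubint : ∀ n : ℕ, Integrable (fun ω => Z n ω - Y ω) μ := fun n => (hZint n).sub hYint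
    have hIntTend : Tendsto (fun n : ℕ => ∫ ω, |Z n ω - Y ω| ∂μ) atTop (𝓝 0) := by
      have hbound : Integrable (fun ω => G ω + |Y ω|) μ := hGint.add hYint.abs
      have h := tendsto_integral_of_dominated_convergence (F := fun (n:ℕ) ω => |Z n ω - Y ω|)
        (bound := fun ω => G ω + |Y ω|)
        (fun n => ((hZsubint n).abs).aestronglyMeasurable)
        hbound
        (by
          intro n
          have h1 : ∀ᵐ ω ∂μ, 0 ≤ Z n ω := hZnn n
          have h2 : ∀ᵐ ω ∂μ, Z n ω ≤ G ω := by
            filter_upwards [hZleG (n:ℚ)] with ω h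
            exact h (by exact_mod_cast Nat.cast_nonneg n)
          filter_upwards [h1, h2] with ω h1 h2
          rw [Real.norm_eq_abs, abs_abs]
          calc |Z n ω - Y ω| ≤ |Z n ω| + |Y ω| := abs_sub _ _
            _ ≤ G ω + |Y ω| := by rw [abs_of_nonneg h1]; exact add_le_add_left h2 _)
        (by
          filter_upwards [hYN] with ω h
          have : Tendsto (fun n : ℕ => Z n ω - Y ω) atTop (𝓝 (Y ω - Y ω)) :=
            h.sub tendsto_const_nhds
          rw [sub_self] at this
          simpa using this.abs)
      simpa using h
    have hsnormZ : Tendsto (fun n : ℕ => eLpNorm (fun ω => Z n ω - Y ω) 1 μ) atTop (𝓝 0) := by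
      have heq : ∀ n : ℕ, eLpNorm (fun ω => Z n ω - Y ω) 1 μ
          = ENNReal.ofReal (∫ ω, |Z n ω - Y ω| ∂μ) := by
        intro n
        rw [eLpNorm_one_eq_lintegral_enorm,
          ← ofReal_integral_norm_eq_lintegral_enorm (hZsubint n)]
        simp [Real.norm_eq_abs]
      simp_rw [heq]
      have := ENNReal.tendsto_ofReal hIntTend
      simpa using this
    have hsnormZ' : Tendsto (fun n : ℕ => eLpNorm (fun ω => Z n ω - Y' ω) 1 μ) atTop (𝓝 0) := by
      have hcontr : ∀ n : ℕ, eLpNorm (fun ω => Z n ω - Y' ω) 1 μ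
          ≤ eLpNorm (fun ω => Z n ω - Y ω) 1 μ := by
        intro n
        have h1 : μ[fun ω => Z n ω - Y ω | (⨆ s : ℝ, (ℱ s : MeasurableSpace Ω))] =ᵐ[μ] fun ω => Z n ω - Y' ω := by
          have h2 := condExp_sub (m := (⨆ s : ℝ, (ℱ s : MeasurableSpace Ω))) (hZint n) hYint
          have h3 : μ[Z n | (⨆ s : ℝ, (ℱ s : MeasurableSpace Ω))] = Z n :=
            condExp_of_stronglyMeasurable hmI stronglyMeasurable_condExp (hZint n)
          filter_upwards [h2] with ω h
          exact (by simpa [h3] using h : (μ[Z n - Y|(⨆ s : ℝ, (ℱ s : MeasurableSpace Ω))]) ω = Z n ω - μ[Y|(⨆ s : ℝ, (ℱ s : MeasurableSpace Ω))] ω)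
        calc eLpNorm (fun ω => Z n ω - Y' ω) 1 μ
            = eLpNorm (μ[fun ω => Z n ω - Y ω | (⨆ s : ℝ, (ℱ s : MeasurableSpace Ω))]) 1 μ := (eLpNorm_congr_ae h1).symm
          _ ≤ eLpNorm (fun ω => Z n ω - Y ω) 1 μ := eLpNorm_one_condExp_le_eLpNorm _
      exact tendsto_of_tendsto_of_tendsto_of_le_of_le tendsto_const_nhds hsnormZ
        (fun n => zero_le) hcontr
    have hzero : eLpNorm (fun ω => Y' ω - Y ω) 1 μ = 0 := by
      have hbd : ∀ n : ℕ, eLpNorm (fun ω => Y' ω - Y ω) 1 μ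
          ≤ eLpNorm (fun ω => Z n ω - Y' ω) 1 μ + eLpNorm (fun ω => Z n ω - Y ω) 1 μ := by
        intro n
        have heq : (fun ω => Y' ω - Y ω) = (fun ω => (Y' ω - Z n ω) + (Z n ω - Y ω)) := by
          funext ω; ring
        rw [heq]
        have h := eLpNorm_add_le (μ := μ) (p := 1)
          (f := fun ω => Y' ω - Z n ω) (g := fun ω => Z n ω - Y ω)
          ((hY'int.sub (hZint n)).aestronglyMeasurable)
          ((hZsubint n).aestronglyMeasurable) le_rfl
        refine le_trans h (add_le_add_left (le_of_eq ?_) _)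
        rw [← eLpNorm_neg]
        congr 1
        funext ω; simp [neg_sub]
      have htends : Tendsto (fun n : ℕ => eLpNorm (fun ω => Z n ω - Y' ω) 1 μ
          + eLpNorm (fun ω => Z n ω - Y ω) 1 μ) atTop (𝓝 0) := by
        have := Tendsto.add hsnormZ' hsnormZ
        simpa using this
      have := ge_of_tendsto htends (Eventually.of_forall hbd)
      simpa using this
    have := (eLpNorm_eq_zero_iff ((hY'int.sub hYint).aestronglyMeasurable) one_ne_zero).1 hzero
    filter_upwards [this] with ω h
    have : Y' ω - Y ω = 0 := h
    linarith
  -- the natural-number filtration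
  set 𝒢 : MeasureTheory.Filtration ℕ mΩ :=
    { seq := fun n => ℱ (n : ℝ),
      mono' := fun i j h => ℱ.mono (by exact_mod_cast h),
      le' := fun n => ℱ.le _ } with h𝒢def
  have h𝒢sup : (⨆ n : ℕ, (𝒢 n : MeasurableSpace Ω)) = (⨆ s : ℝ, (ℱ s : MeasurableSpace Ω)) := by
    refine le_antisymm (iSup_le fun n => hle _) ?_
    refine iSup_le fun s => ?_
    exact le_trans (ℱ.mono (Nat.le_ceil s))
      (le_iSup (fun n : ℕ => (𝒢 n : MeasurableSpace Ω)) ⌈s⌉₊)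
  have hLevy : Tendsto (fun n : ℕ => eLpNorm (μ[Y'|𝒢 n] - Y') 1 μ) atTop (𝓝 0) := by
    have h1 := tendsto_eLpNorm_condExp (μ := μ) (ℱ := 𝒢) Y'
    have h2 : μ[Y'|⨆ n : ℕ, (𝒢 n : MeasurableSpace Ω)] = Y' := by
      rw [h𝒢sup]
      exact condExp_of_stronglyMeasurable hmI hY'meas hY'int
    rw [h2] at h1
    exact h1
  -- the decreasing sequence of dominating tails W n
  set W : ℕ → Ω → ℝ := fun n ω =>
    (⨆ q : ℚ, ⨆ _ : (n:ℚ) ≤ q, (‖Z q ω - Y' ω‖₊ : ℝ≥0∞)).toReal with hWdef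
  have hWmeas : ∀ n, Measurable[mΩ] (W n) := by
    intro n
    apply Measurable.ennreal_toReal
    refine Measurable.iSup fun q => Measurable.iSup fun _ => ?_
    exact (((stronglyMeasurable_condExp.mono hmI).measurable.sub
      ((hY'meas.mono hmI).measurable))).enorm
  have hWnn : ∀ n ω, 0 ≤ W n ω := fun n ω => ENNReal.toReal_nonneg
  set BD : Ω → ℝ := fun ω => G ω + |Y' ω| with hBDdef
  have hBDint : Integrable BD μ := hGint.add hY'int.abs
  have hsupfin : ∀ᵐ ω ∂μ, ∀ n : ℕ,
      (⨆ q : ℚ, ⨆ _ : (n:ℚ) ≤ q, (‖Z q ω - Y' ω‖₊ : ℝ≥0∞)) ≤ ENNReal.ofReal (BD ω) := by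
    filter_upwards [ae_all_iff.2 hZnn, ae_all_iff.2 hZleG, hGnn] with ω h1 h2 hG n
    refine iSup_le fun q => iSup_le fun hq => ?_
    have hq0 : (0:ℚ) ≤ q := le_trans (by exact_mod_cast Nat.cast_nonneg n) hq
    rw [← enorm_eq_nnnorm, ← ofReal_norm]
    apply ENNReal.ofReal_le_ofReal
    calc ‖Z q ω - Y' ω‖ = |Z q ω - Y' ω| := Real.norm_eq_abs _
      _ ≤ |Z q ω| + |Y' ω| := abs_sub _ _
      _ ≤ G ω + |Y' ω| := by
          rw [abs_of_nonneg (h1 q)]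
          exact add_le_add_left (h2 q hq0) _
  have hBDnn : ∀ᵐ ω ∂μ, 0 ≤ BD ω := by
    filter_upwards [hGnn] with ω h
    exact add_nonneg h (abs_nonneg _)
  have hWle : ∀ᵐ ω ∂μ, ∀ n : ℕ, W n ω ≤ BD ω := by
    filter_upwards [hsupfin, hBDnn] with ω h hBD n
    exact ENNReal.toReal_le_of_le_ofReal hBD (h n)
  have hZW : ∀ᵐ ω ∂μ, ∀ n : ℕ, ∀ q : ℚ, (n:ℚ) ≤ q → |Z q ω - Y' ω| ≤ W n ω := by
    filter_upwards [hsupfin] with ω h n q hq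
    have hfin : (⨆ q : ℚ, ⨆ _ : (n:ℚ) ≤ q, (‖Z q ω - Y' ω‖₊ : ℝ≥0∞)) ≠ ∞ :=
      ne_top_of_le_ne_top ENNReal.ofReal_ne_top (h n)
    have hle' : (‖Z q ω - Y' ω‖₊ : ℝ≥0∞)
        ≤ ⨆ q : ℚ, ⨆ _ : (n:ℚ) ≤ q, (‖Z q ω - Y' ω‖₊ : ℝ≥0∞) :=
      le_iSup₂ (f := fun (q : ℚ) (_ : (n:ℚ) ≤ q) => (‖Z q ω - Y' ω‖₊ : ℝ≥0∞)) q hq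
    calc |Z q ω - Y' ω| = ((‖Z q ω - Y' ω‖₊ : ℝ≥0∞)).toReal := by
          simp [Real.norm_eq_abs]
      _ ≤ W n ω := ENNReal.toReal_mono hfin hle'
  have hWtend : ∀ᵐ ω ∂μ, Tendsto (fun n : ℕ => W n ω) atTop (𝓝 0) := by
    filter_upwards [hYQ, hYY'] with ω hten hyy
    rw [Metric.tendsto_atTop]
    intro ε hε
    obtain ⟨Nq, hNq⟩ := Metric.tendsto_atTop.1 hten (ε/2) (half_pos hε)
    obtain ⟨N, hN⟩ := exists_nat_ge Nq
    refine ⟨N, fun n hn => ?_⟩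
    have hWb : W n ω ≤ ε/2 := by
      apply ENNReal.toReal_le_of_le_ofReal (le_of_lt (half_pos hε))
      refine iSup_le fun q => iSup_le fun hq => ?_
      have hqN : Nq ≤ q := le_trans hN (le_trans (by exact_mod_cast hn) hq)
      have := hNq q hqN
      rw [Real.dist_eq] at this
      rw [← enorm_eq_nnnorm, ← ofReal_norm]
      apply ENNReal.ofReal_le_ofReal
      rw [Real.norm_eq_abs, hyy]
      exact le_of_lt this
    rw [Real.dist_eq, sub_zero, abs_of_nonneg (hWnn n ω)]
    linarith
  have hWint : ∀ n, Integrable (W n) μ := by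
    intro n
    refine hBDint.mono' (hWmeas n).aestronglyMeasurable ?_
    filter_upwards [hWle] with ω h
    rw [Real.norm_eq_abs, abs_of_nonneg (hWnn n ω)]
    exact h n
  have hWItend : Tendsto (fun n : ℕ => ∫ ω, W n ω ∂μ) atTop (𝓝 0) := by
    have h := tendsto_integral_of_dominated_convergence (F := W) (bound := BD)
      (fun n => (hWmeas n).aestronglyMeasurable) hBDint
      (by
        intro n
        filter_upwards [hWle] with ω h
        rw [Real.norm_eq_abs, abs_of_nonneg (hWnn n ω)]
        exact h n)
      hWtend
    simpa using h
  -- the bad events have measure zero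
  have hEzero : ∀ ε : ℝ, 0 < ε →
      μ {ω | ∃ᶠ q : ℚ in atTop, ε < |(μ[U (q:ℝ)|ℱ (q:ℝ)]) ω - Y ω|} = 0 := by
    intro ε hε
    have hε3 : 0 < ε/3 := by linarith
    have key : ∀ δ : ℝ, 0 < δ →
        μ {ω | ∃ᶠ q : ℚ in atTop, ε < |(μ[U (q:ℝ)|ℱ (q:ℝ)]) ω - Y ω|} ≤ ENNReal.ofReal δ := by
      intro δ hδ
      have hεδ : 0 < ε * δ / 9 := by positivity
      obtain ⟨n, hn⟩ := (hWItend.eventually_lt_const hεδ).exists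
      obtain ⟨s, hs⟩ := (hLevy.eventually_lt_const
        (show (0:ℝ≥0∞) < ENNReal.ofReal (ε * δ / 9) from ENNReal.ofReal_pos.2 hεδ)).exists
      set A : Ω → ℝ := μ[Y'|𝒢 s] with hAdef
      have hAint : Integrable A μ := integrable_condExp
      have hAY' : ∫ ω, |A ω - Y' ω| ∂μ ≤ ε * δ / 9 := by
        have h1 : ENNReal.ofReal (∫ ω, |A ω - Y' ω| ∂μ) = eLpNorm (A - Y') 1 μ := by
          rw [eLpNorm_one_eq_lintegral_enorm,
            ← ofReal_integral_norm_eq_lintegral_enorm (hAint.sub hY'int)]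
          congr 1
        rw [← ENNReal.ofReal_le_ofReal_iff hεδ.le, h1]
        exact le_of_lt hs
      -- a.e. decomposition
      have hdec : ∀ᵐ ω ∂μ, ∀ q : ℚ, 0 ≤ q → (n:ℚ) ≤ q → (s:ℚ) ≤ q →
          |(μ[U (q:ℝ)|ℱ (q:ℝ)]) ω - Y ω| ≤ (μ[W n|ℱ (q:ℝ)]) ω
            + (μ[(fun ω => |(Y' - A) ω|)|ℱ (q:ℝ)]) ω + |A ω - Y' ω| := by
        rw [ae_all_iff]
        intro q
        by_cases hq : 0 ≤ q ∧ (n:ℚ) ≤ q ∧ (s:ℚ) ≤ q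
        swap
        · filter_upwards with ω h1 h2 h3
          exact absurd ⟨h1, h2, h3⟩ hq
        obtain ⟨hq0, hqn, hqs⟩ := hq
        have htower : μ[Z q|ℱ (q:ℝ)] =ᵐ[μ] μ[U (q:ℝ)|ℱ (q:ℝ)] :=
          condExp_condExp_of_le (hle (q:ℝ)) hmI
        have hsplit : μ[Z q|ℱ (q:ℝ)] =ᵐ[μ] μ[Z q - Y'|ℱ (q:ℝ)] + μ[Y'|ℱ (q:ℝ)] := by
          have h1 := condExp_add (μ := μ) (m := (ℱ (q:ℝ) : MeasurableSpace Ω))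
            ((hZint q).sub hY'int) hY'int
          rwa [sub_add_cancel] at h1
        have hY'split : μ[Y'|ℱ (q:ℝ)] =ᵐ[μ] μ[Y' - A|ℱ (q:ℝ)] + A := by
          have h1 := condExp_add (μ := μ) (m := (ℱ (q:ℝ) : MeasurableSpace Ω))
            (hY'int.sub hAint) hAint
          rw [sub_add_cancel] at h1
          have hA : μ[A|ℱ (q:ℝ)] = A := by
            refine condExp_of_stronglyMeasurable (ℱ.le _) ?_ hAint
            exact stronglyMeasurable_condExp.mono (ℱ.mono (by exact_mod_cast hqs))
          rw [hA] at h1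
          exact h1
        have habs1 := abs_condexp_le_abs (μ := μ) (m := (ℱ (q:ℝ) : MeasurableSpace Ω))
          (Z q - Y') ((hZint q).sub hY'int)
        have habs2 := abs_condexp_le_abs (μ := μ) (m := (ℱ (q:ℝ) : MeasurableSpace Ω))
          (Y' - A) (hY'int.sub hAint)
        have hmono : μ[(fun ω => |(Z q - Y') ω|)|ℱ (q:ℝ)] ≤ᵐ[μ] μ[W n|ℱ (q:ℝ)] := by
          refine condExp_mono ((hZint q).sub hY'int).abs (hWint n) ?_
          filter_upwards [hZW] with ω h
          simpa using h n q hqn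
        filter_upwards [htower, hsplit, hY'split, habs1, habs2, hmono, hYY']
          with ω h1 h2 h3 h4 h5 h6 h7
        intro _ _ _
        have e1 : (μ[U (q:ℝ)|ℱ (q:ℝ)]) ω - Y ω
            = (μ[Z q - Y'|ℱ (q:ℝ)]) ω + ((μ[Y' - A|ℱ (q:ℝ)]) ω + (A ω - Y' ω)) := by
          have hYω : Y' ω = Y ω := h7
          have h2' : (μ[Z q|ℱ (q:ℝ)]) ω = (μ[Z q - Y'|ℱ (q:ℝ)]) ω + (μ[Y'|ℱ (q:ℝ)]) ω := by
            simpa using h2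
          have h3' : (μ[Y'|ℱ (q:ℝ)]) ω = (μ[Y' - A|ℱ (q:ℝ)]) ω + A ω := by
            simpa using h3
          rw [← h1, h2', h3', ← hYω]
          ring
        calc |(μ[U (q:ℝ)|ℱ (q:ℝ)]) ω - Y ω|
            = |(μ[Z q - Y'|ℱ (q:ℝ)]) ω + ((μ[Y' - A|ℱ (q:ℝ)]) ω + (A ω - Y' ω))| := by
              rw [e1]
          _ ≤ |(μ[Z q - Y'|ℱ (q:ℝ)]) ω| + |(μ[Y' - A|ℱ (q:ℝ)]) ω + (A ω - Y' ω)| :=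
              abs_add_le _ _
          _ ≤ |(μ[Z q - Y'|ℱ (q:ℝ)]) ω| + (|(μ[Y' - A|ℱ (q:ℝ)]) ω| + |A ω - Y' ω|) :=
              add_le_add_right (abs_add_le _ _) _
          _ ≤ (μ[W n|ℱ (q:ℝ)]) ω + ((μ[(fun ω => |(Y' - A) ω|)|ℱ (q:ℝ)]) ω + |A ω - Y' ω|) := by
              exact add_le_add (le_trans h4 h6) (add_le_add_left h5 _)
          _ = (μ[W n|ℱ (q:ℝ)]) ω + (μ[(fun ω => |(Y' - A) ω|)|ℱ (q:ℝ)]) ω + |A ω - Y' ω| := by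
              ring
      -- bad sets
      set B1 : Set Ω := {ω | ∃ q : ℚ, ε/3 < (μ[W n|ℱ (q:ℝ)]) ω} with hB1def
      set B2 : Set Ω := {ω | ∃ q : ℚ, ε/3 < (μ[(fun ω => |(Y' - A) ω|)|ℱ (q:ℝ)]) ω} with hB2def
      set B3 : Set Ω := {ω | ε/3 < |A ω - Y' ω|} with hB3def
      have hsub : ∀ᵐ ω ∂μ, ω ∈ {ω | ∃ᶠ q : ℚ in atTop, ε < |(μ[U (q:ℝ)|ℱ (q:ℝ)]) ω - Y ω|}
          → ω ∈ B1 ∪ B2 ∪ B3 := by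
        filter_upwards [hdec] with ω h hE
        have hE' : ∃ᶠ q : ℚ in atTop, ε < |(μ[U (q:ℝ)|ℱ (q:ℝ)]) ω - Y ω| := hE
        have hev : ∀ᶠ q : ℚ in atTop, max (max (n:ℚ) (s:ℚ)) 0 ≤ q := eventually_ge_atTop _
        obtain ⟨q, hq1, hq2⟩ := (hE'.and_eventually hev).exists
        have hq0 : (0:ℚ) ≤ q := le_trans (le_max_right _ _) hq2
        have hqn : (n:ℚ) ≤ q := le_trans (le_trans (le_max_left _ _) (le_max_left _ _)) hq2
        have hqs : (s:ℚ) ≤ q := le_trans (le_trans (le_max_right _ _) (le_max_left _ _)) hq2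
        have hb := h q hq0 hqn hqs
        by_contra hno
        simp only [Set.mem_union, hB1def, hB2def, hB3def, Set.mem_setOf_eq, not_or,
          not_exists, not_lt] at hno
        obtain ⟨⟨hno1, hno2⟩, hno3⟩ := hno
        have := hno1 q
        have := hno2 q
        linarith
      have hEle : μ {ω | ∃ᶠ q : ℚ in atTop, ε < |(μ[U (q:ℝ)|ℱ (q:ℝ)]) ω - Y ω|}
          ≤ μ (B1 ∪ B2 ∪ B3) := measure_mono_ae hsub
      have hB1 : μ B1 ≤ ENNReal.ofReal (δ/3) := by
        refine le_trans (maximal_rat ℱ (W n) (hWint n)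
          (Eventually.of_forall (hWnn n)) hε3) ?_
        apply ENNReal.ofReal_le_ofReal
        rw [div_le_iff₀ hε3] at *
        nlinarith [hn.le]
      have hB2 : μ B2 ≤ ENNReal.ofReal (δ/3) := by
        refine le_trans (maximal_rat ℱ (fun ω => |(Y' - A) ω|) (hY'int.sub hAint).abs
          (Eventually.of_forall fun ω => abs_nonneg _) hε3) ?_
        apply ENNReal.ofReal_le_ofReal
        have heq : ∫ ω, |(Y' - A) ω| ∂μ = ∫ ω, |A ω - Y' ω| ∂μ := by
          refine integral_congr_ae (Eventually.of_forall fun ω => ?_)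
          simp [abs_sub_comm]
        rw [heq, div_le_iff₀ hε3]
        nlinarith [hAY']
      have hB3 : μ B3 ≤ ENNReal.ofReal (δ/3) := by
        refine le_trans (markov_abs (fun ω => A ω - Y' ω) (hAint.sub hY'int) hε3) ?_
        apply ENNReal.ofReal_le_ofReal
        rw [div_le_iff₀ hε3]
        nlinarith [hAY']
      calc μ {ω | ∃ᶠ q : ℚ in atTop, ε < |(μ[U (q:ℝ)|ℱ (q:ℝ)]) ω - Y ω|}
          ≤ μ (B1 ∪ B2 ∪ B3) := hEle
        _ ≤ μ (B1 ∪ B2) + μ B3 := measure_union_le _ _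
        _ ≤ μ B1 + μ B2 + μ B3 := add_le_add_left (measure_union_le _ _) _
        _ ≤ ENNReal.ofReal (δ/3) + ENNReal.ofReal (δ/3) + ENNReal.ofReal (δ/3) := by
            exact add_le_add (add_le_add hB1 hB2) hB3
        _ = ENNReal.ofReal δ := by
            rw [← ENNReal.ofReal_add (by linarith) (by linarith),
              ← ENNReal.ofReal_add (by linarith) (by linarith)]
            congr 1
            ring
    refine le_antisymm (ENNReal.le_of_forall_pos_le_add fun ε' hε' _ => ?_) (zero_le)
    rw [zero_add]
    have h := key ε' (by exact_mod_cast hε')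
    simpa [ENNReal.ofReal_coe_nnreal] using h
  -- convergence along the rationals
  have hQtend : ∀ᵐ ω ∂μ, Tendsto (fun q : ℚ => (μ[U (q:ℝ)|ℱ (q:ℝ)]) ω) atTop (𝓝 (Y ω)) := by
    have hall : ∀ᵐ ω ∂μ, ∀ m : ℕ,
        ω ∉ {ω | ∃ᶠ q : ℚ in atTop, 1/((m:ℝ)+1) < |(μ[U (q:ℝ)|ℱ (q:ℝ)]) ω - Y ω|} := by
      rw [ae_all_iff]
      intro m
      exact measure_eq_zero_iff_ae_notMem.mp (hEzero (1/((m:ℝ)+1)) (by positivity))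
    filter_upwards [hall] with ω h
    rw [Metric.tendsto_atTop]
    intro ε hε
    obtain ⟨m, hm⟩ := exists_nat_one_div_lt hε
    have h' := h m
    rw [not_frequently] at h'
    have h'' : ∀ᶠ q : ℚ in atTop, |(μ[U (q:ℝ)|ℱ (q:ℝ)]) ω - Y ω| ≤ 1/((m:ℝ)+1) := by
      filter_upwards [h'] with q hq
      exact not_lt.1 hq
    obtain ⟨N, hN⟩ := eventually_atTop.1 h''
    refine ⟨N, fun q hq => ?_⟩
    rw [Real.dist_eq]
    exact lt_of_le_of_lt (hN q hq) hm
  -- conclusion via right-continuity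
  filter_upwards [hQtend] with ω h
  exact extend_rat_tendsto (fun t => (μ[U t|ℱ t]) ω) (Y ω) (fun t => (hcadlag ω t).1) h
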